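/- arXiv:2110.14514 — 3 statements merged into one kernel-verified Lean document; each statement's English description precedes it below -/
import Mathlib

section
/- Let d, R be positive integers, I : Fin d → ℕ, weights λ : Fin R → ℝ, factor matrices A : (k : Fin d) → Fin (I k) → Fin R → ℝ, a data tensor x : (Π_k Fin (I k)) → ℝ, and a loss function f : ℝ → ℝ → ℝ such that for every x₀ the map m ↦ f(x₀, m) is differentiable on ℝ with derivative ∂f/∂m. Fix a mode k₀, a row p ∈ Fin (I k₀), and a column j₀ ∈ Fin R. Then the map ℝ → ℝ sending a to F(a) = Σ_{i ∈ Π_k Fin (I k)} f(x_i, m_i(a)), where m_i(a) is the Kruskal model entry computed with the (p, j₀) entry of the k₀-th factor matrix replaced by a, is differentiable at a = A^{(k₀)}(p, j₀) with derivative Σ_{i : i_{k₀} = p} (∂f/∂m)(x_i, m_i) · λ_{j₀} · Π_{l ≠ k₀} A^{(l)}(i_l, j₀), where m_i is the unmodified Kruskal model entry. -/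
/-!
Only the factors of mode `k₀` depend on the entry `a = A k₀ p j₀`, so each model entry `m_i(a)`
is affine in `a`: it is constant unless `i k₀ = p`, and otherwise has slope
`λ j₀ * ∏_{l ≠ k₀} A l (i l) j₀`. The chain rule applied to each summand `f (x i) (m_i a)` then
gives the gradient.
-/

open Finset Function

@[to_additive]
theorem Finset.prod_apply_update {ι M : Type*} [Fintype ι] [DecidableEq ι] [CommMonoid M]
    {α : ι → Type*} (e : (k : ι) → α k → M) (g : (k : ι) → α k) (k₀ : ι) (v : α k₀) :
    ∏ k, e k (update g k₀ v k) = e k₀ v * ∏ k ∈ univ.erase k₀, e k (g k) := by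
  simp_rw [apply_update e, prod_update_of_mem (mem_univ k₀), sdiff_singleton_eq_erase]

theorem hasDerivAt_sum_mul_update {ι 𝕜 : Type*} [Fintype ι] [DecidableEq ι]
    [NontriviallyNormedField 𝕜] (w c : ι → 𝕜) (j₀ : ι) (a : 𝕜) :
    HasDerivAt (fun t => ∑ j, w j * update c j₀ t j) (w j₀) a := by
  have hsplit := sum_apply_update (fun j (t : 𝕜) => w j * t) c j₀
  simp_rw [hsplit]
  simpa using ((hasDerivAt_id a).const_mul (w j₀)).add_const (∑ k ∈ univ.erase j₀, w k * c k)

section Kruskal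

variable {d R : ℕ} {I : Fin d → ℕ}

def kruskalEntry (lam : Fin R → ℝ) (A : (k : Fin d) → Fin (I k) → Fin R → ℝ)
    (i : (k : Fin d) → Fin (I k)) : ℝ :=
  ∑ j, lam j * ∏ k, A k (i k) j

theorem kruskalEntry_update_factor (lam : Fin R → ℝ) (A : (k : Fin d) → Fin (I k) → Fin R → ℝ)
    (k₀ : Fin d) (B : Fin (I k₀) → Fin R → ℝ) (i : (k : Fin d) → Fin (I k)) :
    kruskalEntry lam (update A k₀ B) i =
      ∑ j, (lam j * ∏ l ∈ univ.erase k₀, A l (i l) j) * B (i k₀) j := by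
  refine sum_congr rfl fun j _ => ?_
  rw [prod_apply_update (fun k (M : Fin (I k) → Fin R → ℝ) => M (i k) j)]
  ring

theorem hasDerivAt_kruskalEntry_update_entry (lam : Fin R → ℝ)
    (A : (k : Fin d) → Fin (I k) → Fin R → ℝ) (k₀ : Fin d) (p : Fin (I k₀)) (j₀ : Fin R)
    (i : (k : Fin d) → Fin (I k)) (a : ℝ) :
    HasDerivAt
      (fun t => kruskalEntry lam (update A k₀ (update (A k₀) p (update (A k₀ p) j₀ t))) i)
      (if i k₀ = p then lam j₀ * ∏ l ∈ univ.erase k₀, A l (i l) j₀ else 0) a := by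
  simp_rw [kruskalEntry_update_factor]
  split_ifs with hi
  · simp_rw [hi, update_self]
    exact hasDerivAt_sum_mul_update _ (A k₀ p) j₀ a
  · simp_rw [update_of_ne hi]
    exact hasDerivAt_const a _

end Kruskal

theorem gcp_objective_hasDerivAt_factor_entry_general
    (d R : ℕ) (I : Fin d → ℕ)
    (lam : Fin R → ℝ) (A : (k : Fin d) → Fin (I k) → Fin R → ℝ)
    (x : ((k : Fin d) → Fin (I k)) → ℝ)
    (f f' : ℝ → ℝ → ℝ)
    (hf : ∀ x₀ m : ℝ, HasDerivAt (fun m' => f x₀ m') (f' x₀ m) m)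
    (k₀ : Fin d) (p : Fin (I k₀)) (j₀ : Fin R) :
    HasDerivAt
      (fun a : ℝ => ∑ i : (k : Fin d) → Fin (I k),
        f (x i) (∑ j : Fin R, lam j *
          ∏ k : Fin d,
            Function.update A k₀
              (Function.update (A k₀) p (Function.update (A k₀ p) j₀ a)) k (i k) j))
      (∑ i ∈ Finset.univ.filter (fun i : (k : Fin d) → Fin (I k) => i k₀ = p),
        f' (x i) (∑ j : Fin R, lam j * ∏ k : Fin d, A k (i k) j) *
          (lam j₀ * ∏ l ∈ Finset.univ.erase k₀, A l (i l) j₀))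
      (A k₀ p j₀) := by
  have hsummand (i : (k : Fin d) → Fin (I k)) := (hf (x i) _).comp
    (A k₀ p j₀) (hasDerivAt_kruskalEntry_update_entry lam A k₀ p j₀ i (A k₀ p j₀))
  simp only [update_eq_self] at hsummand
  rw [sum_filter]
  have hsum := HasDerivAt.fun_sum (u := univ) fun i _ => hsummand i
  simp only [mul_ite, mul_zero] at hsum
  exact hsum

/-- Gradient of the GCP objective `F(a) = ∑_i f(x_i, m_i(a))` with respect to a
single entry `A k₀ p j₀` of a factor matrix: it is differentiable at the current
value with derivative `∑_{i : i k₀ = p} f'(x_i, m_i) * λ j₀ * ∏_{l ≠ k₀} A l (i l) j₀`. -/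
theorem gcp_objective_hasDerivAt_factor_entry
    (d R : ℕ) (hd : 0 < d) (hR : 0 < R) (I : Fin d → ℕ)
    (lam : Fin R → ℝ) (A : (k : Fin d) → Fin (I k) → Fin R → ℝ)
    (x : ((k : Fin d) → Fin (I k)) → ℝ)
    (f f' : ℝ → ℝ → ℝ)
    (hf : ∀ x₀ m : ℝ, HasDerivAt (fun m' => f x₀ m') (f' x₀ m) m)
    (k₀ : Fin d) (p : Fin (I k₀)) (j₀ : Fin R) :
    HasDerivAt
      (fun a : ℝ => ∑ i : (k : Fin d) → Fin (I k),
        f (x i) (∑ j : Fin R, lam j *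
          ∏ k : Fin d,
            Function.update A k₀
              (Function.update (A k₀) p (Function.update (A k₀ p) j₀ a)) k (i k) j))
      (∑ i ∈ Finset.univ.filter (fun i : (k : Fin d) → Fin (I k) => i k₀ = p),
        f' (x i) (∑ j : Fin R, lam j * ∏ k : Fin d, A k (i k) j) *
          (lam j₀ * ∏ l ∈ Finset.univ.erase k₀, A l (i l) j₀))
      (A k₀ p j₀) :=
  gcp_objective_hasDerivAt_factor_entry_general d R I lam A x f f' hf k₀ p j₀
end

section
/- Let d, R be positive integers, I : Fin d → ℕ, factor matrices A : (k : Fin d) → Fin (I k) → Fin R → ℝ, temporal weights s : Fin R → ℝ, a data tensor x : (Π_k Fin (I k)) → ℝ, a regularization parameter μ ∈ ℝ, and a loss function f : ℝ → ℝ → ℝ such that for every x₀ the map m ↦ f(x₀, m) is differentiable on ℝ with derivative ∂f/∂m. Fix j₀ ∈ Fin R. Then the map ℝ → ℝ sending a to F(a) = Σ_{i ∈ Π_k Fin (I k)} f(x_i, m_i(a)) + (μ/2) · Σ_{j ∈ Fin R} (s_j(a))², where s(a) is s with its j₀-th entry replaced by a and m_i(a) is the Kruskal model entry with weights s(a), is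 differentiable at a = s_{j₀} with derivative Σ_{i ∈ Π_k Fin (I k)} (∂f/∂m)(x_i, m_i) · Π_{k ∈ Fin d} A^{(k)}(i_k, j₀) + μ · s_{j₀}, where m_i is the Kruskal model entry with weights s. -/
/-!
Only the `j₀`-th weight moves, so each model entry `m_i(a)` is affine in `a` with slope
`∏ₖ A k (i k) j₀`, and the regulariser is `a²` plus a constant; the chain rule does the rest.
-/

open Finset

theorem HasDerivAt.sum_apply_update {𝕜 ι : Type*} [NontriviallyNormedField 𝕜] [Fintype ι]
    [DecidableEq ι] {g : ι → 𝕜 → 𝕜} {g' a₀ : 𝕜} (s : ι → 𝕜) (j₀ : ι)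
    (hg : HasDerivAt (g j₀) g' a₀) :
    HasDerivAt (fun a => ∑ j, g j (Function.update s j₀ a j)) g' a₀ := by
  have hsplit : (fun a => ∑ j, g j (Function.update s j₀ a j))
      = fun a => g j₀ a + ∑ j ∈ {j₀}ᶜ, g j (s j) := by
    funext a
    rw [Fintype.sum_eq_add_sum_compl j₀, Function.update_self]
    congr 1
    refine sum_congr rfl fun j hj => ?_
    rw [Function.update_of_ne (by simpa using hj)]
  rw [hsplit]
  exact hg.add_const _

theorem streaming_gcp_temporal_hasDerivAt_weight_general
    (d R : ℕ) (I : Fin d → ℕ)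
    (A : (k : Fin d) → Fin (I k) → Fin R → ℝ) (s : Fin R → ℝ)
    (x : ((k : Fin d) → Fin (I k)) → ℝ) (μ : ℝ)
    (f f' : ℝ → ℝ → ℝ)
    (hf : ∀ x₀ m : ℝ, HasDerivAt (fun m' => f x₀ m') (f' x₀ m) m)
    (j₀ : Fin R) :
    HasDerivAt
      (fun a : ℝ =>
        (∑ i : (k : Fin d) → Fin (I k),
          f (x i) (∑ j : Fin R, Function.update s j₀ a j * ∏ k : Fin d, A k (i k) j))
        + μ / 2 * ∑ j : Fin R, (Function.update s j₀ a j) ^ 2)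
      ((∑ i : (k : Fin d) → Fin (I k),
        f' (x i) (∑ j : Fin R, s j * ∏ k : Fin d, A k (i k) j) *
          ∏ k : Fin d, A k (i k) j₀)
        + μ * s j₀)
      (s j₀) := by
  have hmodel (i : (k : Fin d) → Fin (I k)) :
      HasDerivAt (fun a => ∑ j, Function.update s j₀ a j * ∏ k, A k (i k) j)
        (∏ k, A k (i k) j₀) (s j₀) :=
    HasDerivAt.sum_apply_update (g := fun j t => t * ∏ k, A k (i k) j) s j₀
      (hasDerivAt_mul_const _)
  have hloss := HasDerivAt.fun_sum (u := univ) fun i _ => (hf (x i) _).comp (s j₀) (hmodel i)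
  have hreg : HasDerivAt (fun a => ∑ j, Function.update s j₀ a j ^ 2) (2 * s j₀) (s j₀) :=
    HasDerivAt.sum_apply_update (g := fun _ t => t ^ 2) s j₀ (by simpa using hasDerivAt_pow 2 (s j₀))
  simp only [Function.update_eq_self] at hloss
  exact (hloss.add (hreg.const_mul (μ / 2))).congr_deriv (by ring)

/-- Gradient of the streaming GCP temporal-weights objective
`F(a) = ∑_i f(x_i, m_i(a)) + (μ/2) ∑_j s_j(a)²`, where `s(a)` is `s` with its
`j₀`-th entry replaced by `a`: it is differentiable at `s j₀` with derivative
`∑_i f'(x_i, m_i) * ∏_k A k (i k) j₀ + μ * s j₀`. -/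
theorem streaming_gcp_temporal_hasDerivAt_weight
    (d R : ℕ) (hd : 0 < d) (hR : 0 < R) (I : Fin d → ℕ)
    (A : (k : Fin d) → Fin (I k) → Fin R → ℝ) (s : Fin R → ℝ)
    (x : ((k : Fin d) → Fin (I k)) → ℝ) (μ : ℝ)
    (f f' : ℝ → ℝ → ℝ)
    (hf : ∀ x₀ m : ℝ, HasDerivAt (fun m' => f x₀ m') (f' x₀ m) m)
    (j₀ : Fin R) :
    HasDerivAt
      (fun a : ℝ =>
        (∑ i : (k : Fin d) → Fin (I k),
          f (x i) (∑ j : Fin R, Function.update s j₀ a j * ∏ k : Fin d, A k (i k) j))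
        + μ / 2 * ∑ j : Fin R, (Function.update s j₀ a j) ^ 2)
      ((∑ i : (k : Fin d) → Fin (I k),
        f' (x i) (∑ j : Fin R, s j * ∏ k : Fin d, A k (i k) j) *
          ∏ k : Fin d, A k (i k) j₀)
        + μ * s j₀)
      (s j₀) :=
  streaming_gcp_temporal_hasDerivAt_weight_general d R I A s x μ f f' hf j₀
end

section
/- Let d, R be positive integers, I : Fin d → ℕ, a shared weight vector s : Fin R → ℝ, and two families of factor matrices A, A' : (k : Fin d) → Fin (I k) → Fin R → ℝ, where A' is held fixed (the 'old' factors). Fix a mode k₀, row p ∈ Fin (I k₀), and column j₀ ∈ Fin R. Then the map ℝ → ℝ sending a to (1/2) · Σ_{i ∈ Π_k Fin (I k)} (m'_i − m_i(a))², where m' is the Kruskal model from (s, A') and m(a) is the Kruskal model from (s, A) with the (p, j₀) entry of A^{(k₀)} replaced by a, is differentiable at a = A^{(k₀)}(p, j₀) with derivative Σ_{j' ∈ Fin R} s_{j₀} s_{j'} [ A^{(k₀)}(p, j') · Π_{l ≠ k₀} (Σ_r A^{(l)}(r, j')·A^{(l)}(r, j₀)) − A'^{(k₀)}(p, j') ·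 Π_{l ≠ k₀} (Σ_r A'^{(l)}(r, j')·A^{(l)}(r, j₀)) ]. -/
/-!
Each Kruskal entry `m_i` is affine in every single factor entry: replacing `A k₀ p j₀` by `a`
adds `(a - A k₀ p j₀) * ∂m_i`, with `∂m_i = s j₀ * [i k₀ = p] * ∏_{l ≠ k₀} A l (i l) j₀`.
Hence the derivative of `½ ‖M' - M(a)‖²` is `⟪M - M', ∂M⟫`, and the inner product of a
Kruskal model with `∂M` factors over the modes, because the sum over all multi-indices of a
product of per-mode factors is the product of the per-mode sums.
-/

open Finset

theorem hasDerivAt_half_sum_sq_sub {ι : Type*} [Fintype ι] (c : ι → ℝ) {g : ι → ℝ → ℝ}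
    {g' : ι → ℝ} {x : ℝ} (hg : ∀ i, HasDerivAt (g i) (g' i) x) :
    HasDerivAt (fun a => (1 / 2 : ℝ) * ∑ i, (c i - g i a) ^ 2)
      (∑ i, (g i x - c i) * g' i) x := by
  have h := (HasDerivAt.fun_sum (u := univ) fun i _ =>
    ((hg i).const_sub (c i)).fun_pow 2).const_mul (1 / 2 : ℝ)
  refine h.congr_deriv ?_
  rw [mul_sum]
  refine sum_congr rfl fun i _ => ?_
  push_cast
  ring

section Kruskal

variable {ι ρ : Type*} {κ : ι → Type*} [Fintype ι]

def kruskal [Fintype ρ] (s : ρ → ℝ) (A : (k : ι) → κ k → ρ → ℝ) (i : (k : ι) → κ k) : ℝ :=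
  ∑ j, s j * ∏ k, A k (i k) j

variable [DecidableEq ι] [∀ k, DecidableEq (κ k)]

def kruskalFactorPartial (s : ρ → ℝ) (A : (k : ι) → κ k → ρ → ℝ) (k₀ : ι) (p : κ k₀) (j₀ : ρ)
    (i : (k : ι) → κ k) : ℝ :=
  s j₀ * if i k₀ = p then ∏ l ∈ univ.erase k₀, A l (i l) j₀ else 0

theorem prod_update_factor_entry [DecidableEq ρ] (A : (k : ι) → κ k → ρ → ℝ) (k₀ : ι) (p : κ k₀)
    (j₀ : ρ) (a : ℝ) (i : (k : ι) → κ k) (j : ρ) :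
    ∏ k, Function.update A k₀ (Function.update (A k₀) p (Function.update (A k₀ p) j₀ a)) k (i k) j
      = ∏ k, A k (i k) j
        + if j = j₀ then (a - A k₀ p j₀) *
            (if i k₀ = p then ∏ l ∈ univ.erase k₀, A l (i l) j₀ else 0) else 0 := by
  rw [← mul_prod_erase univ _ (mem_univ k₀), ← mul_prod_erase univ _ (mem_univ k₀),
    prod_congr rfl fun k hk => by rw [Function.update_of_ne (ne_of_mem_erase hk)],
    Function.update_self]
  by_cases hp : i k₀ = p
  · subst hp
    by_cases hj : j = j₀
    · subst hj
      simp only [Function.update_self, if_true]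
      ring
    · simp [hj]
  · simp [hp]

theorem sum_prod_mul_ite_prod_erase [∀ k, Fintype (κ k)] (B C : (k : ι) → κ k → ℝ) (k₀ : ι)
    (p : κ k₀) :
    ∑ i : (k : ι) → κ k,
      (∏ k, B k (i k)) * (if i k₀ = p then ∏ l ∈ univ.erase k₀, C l (i l) else 0)
      = B k₀ p * ∏ l ∈ univ.erase k₀, ∑ r, B l r * C l r := by
  -- absorb the constraint `i k₀ = p` into the `k₀`-th factor, so that the sum factors
  set C' := Function.update C k₀ fun r => if r = p then 1 else 0
  have hC'_ne : ∀ l ∈ univ.erase k₀, C' l = C l := fun l hl =>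
    Function.update_of_ne (ne_of_mem_erase hl) _ _
  have hC' : ∀ i : (k : ι) → κ k,
      (if i k₀ = p then ∏ l ∈ univ.erase k₀, C l (i l) else 0) = ∏ k, C' k (i k) := by
    intro i
    rw [← mul_prod_erase univ (fun k => C' k (i k)) (mem_univ k₀),
      prod_congr (f := fun l => C' l (i l)) rfl fun l hl => by rw [hC'_ne l hl]]
    simp [C', ite_mul]
  simp_rw [hC', ← prod_mul_distrib]
  rw [← Fintype.prod_sum fun k r => B k r * C' k r,
    ← mul_prod_erase univ (fun k => ∑ r, B k r * C' k r) (mem_univ k₀),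
    prod_congr (f := fun l => ∑ r, B l r * C' l r) rfl fun l hl => by rw [hC'_ne l hl]]
  simp [C']

variable [Fintype ρ]

theorem kruskal_update_factor_entry [DecidableEq ρ] (s : ρ → ℝ) (A : (k : ι) → κ k → ρ → ℝ)
    (k₀ : ι) (p : κ k₀) (j₀ : ρ) (a : ℝ) (i : (k : ι) → κ k) :
    kruskal s (Function.update A k₀ (Function.update (A k₀) p (Function.update (A k₀ p) j₀ a))) i
      = kruskal s A i + (a - A k₀ p j₀) * kruskalFactorPartial s A k₀ p j₀ i := by
  simp only [kruskal, kruskalFactorPartial, prod_update_factor_entry, mul_add, sum_add_distrib,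
    mul_ite, mul_zero, sum_ite_eq', mem_univ, if_true]
  split_ifs <;> ring

theorem hasDerivAt_kruskal_update_factor_entry [DecidableEq ρ] (s : ρ → ℝ)
    (A : (k : ι) → κ k → ρ → ℝ) (k₀ : ι) (p : κ k₀) (j₀ : ρ) (i : (k : ι) → κ k) :
    HasDerivAt
      (fun a => kruskal s
        (Function.update A k₀ (Function.update (A k₀) p (Function.update (A k₀ p) j₀ a))) i)
      (kruskalFactorPartial s A k₀ p j₀ i) (A k₀ p j₀) := by
  simp only [kruskal_update_factor_entry]
  simpa using (((hasDerivAt_id _).sub_const (A k₀ p j₀)).mul_const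
    (kruskalFactorPartial s A k₀ p j₀ i)).const_add (kruskal s A i)

theorem sum_kruskal_mul_kruskalFactorPartial [∀ k, Fintype (κ k)] (s : ρ → ℝ)
    (B A : (k : ι) → κ k → ρ → ℝ) (k₀ : ι) (p : κ k₀) (j₀ : ρ) :
    ∑ i, kruskal s B i * kruskalFactorPartial s A k₀ p j₀ i
      = ∑ j, s j₀ * s j * (B k₀ p j * ∏ l ∈ univ.erase k₀, ∑ r, B l r j * A l r j₀) := by
  calc ∑ i, kruskal s B i * kruskalFactorPartial s A k₀ p j₀ i
      = ∑ j, s j₀ * s j * ∑ i : (k : ι) → κ k, (∏ k, B k (i k) j) *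
          (if i k₀ = p then ∏ l ∈ univ.erase k₀, A l (i l) j₀ else 0) := by
        simp only [kruskal, kruskalFactorPartial, sum_mul, mul_sum]
        rw [sum_comm]
        exact sum_congr rfl fun j _ => sum_congr rfl fun i _ => by ring
    _ = _ := sum_congr rfl fun j _ => by
        rw [sum_prod_mul_ite_prod_erase (fun k r => B k r j) (fun k r => A k r j₀)]

end Kruskal

theorem history_term_hasDerivAt_factor_entry_general
    (d R : ℕ) (I : Fin d → ℕ)
    (s : Fin R → ℝ)
    (A A' : (k : Fin d) → Fin (I k) → Fin R → ℝ)
    (k₀ : Fin d) (p : Fin (I k₀)) (j₀ : Fin R) :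
    HasDerivAt
      (fun a : ℝ => (1 / 2 : ℝ) * ∑ i : (k : Fin d) → Fin (I k),
        ((∑ j : Fin R, s j * ∏ k : Fin d, A' k (i k) j)
          - (∑ j : Fin R, s j *
              ∏ k : Fin d,
                Function.update A k₀
                  (Function.update (A k₀) p (Function.update (A k₀ p) j₀ a)) k (i k) j)) ^ 2)
      (∑ j' : Fin R, s j₀ * s j' *
        (A k₀ p j' * (∏ l ∈ Finset.univ.erase k₀, ∑ r : Fin (I l), A l r j' * A l r j₀)
          - A' k₀ p j' * (∏ l ∈ Finset.univ.erase k₀, ∑ r : Fin (I l), A' l r j' * A l r j₀)))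
      (A k₀ p j₀) := by
  refine (hasDerivAt_half_sum_sq_sub (kruskal s A')
    (hasDerivAt_kruskal_update_factor_entry s A k₀ p j₀)).congr_deriv ?_
  simp only [Function.update_eq_self, sub_mul, sum_sub_distrib,
    sum_kruskal_mul_kruskalFactorPartial, mul_sub]

/-- Entrywise gradient of the streaming history regularization term
`(1/2)‖M' − M(a)‖_F²` with respect to the entry `A k₀ p j₀` of the current
factor matrix (the old factors `A'` held fixed). -/
theorem history_term_hasDerivAt_factor_entry
    (d R : ℕ) (hd : 0 < d) (hR : 0 < R) (I : Fin d → ℕ)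
    (s : Fin R → ℝ)
    (A A' : (k : Fin d) → Fin (I k) → Fin R → ℝ)
    (k₀ : Fin d) (p : Fin (I k₀)) (j₀ : Fin R) :
    HasDerivAt
      (fun a : ℝ => (1 / 2 : ℝ) * ∑ i : (k : Fin d) → Fin (I k),
        ((∑ j : Fin R, s j * ∏ k : Fin d, A' k (i k) j)
          - (∑ j : Fin R, s j *
              ∏ k : Fin d,
                Function.update A k₀
                  (Function.update (A k₀) p (Function.update (A k₀ p) j₀ a)) k (i k) j)) ^ 2)
      (∑ j' : Fin R, s j₀ * s j' *
        (A k₀ p j' * (∏ l ∈ Finset.univ.erase k₀, ∑ r : Fin (I l), A l r j' * A l r j₀)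
          - A' k₀ p j' * (∏ l ∈ Finset.univ.erase k₀, ∑ r : Fin (I l), A' l r j' * A l r j₀)))
      (A k₀ p j₀) :=
  history_term_hasDerivAt_factor_entry_general d R I s A A' k₀ p j₀
end
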